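/- Let ν > -1 and let Φ_ν(z) = Π_{n≥1}(1 - z²/γ_{ν,n}²) with positive zeros γ_{ν,n}, and set ω_k = Σ_{n≥1} γ_{ν,n}^{-2k}. Then ω₁ = 15/(4(ν+1)), obtained as ω₁ = -κ₁ where κ₁ = -3·5/(4(ν+1)) is the coefficient of z² in the power series Φ_ν(z) = 1 + Σ_{n≥1} (-1)^n(2n+1)(4n+1) z^{2n}/(2^{2n} n! (ν+1)_n). -/

import Mathlib

open Complex Finset

/-- Bessel function of the first kind of order `ν`, defined by its power series. -/
noncomputable def besselJ (ν : ℝ) (z : ℂ) : ℂ :=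
  ∑' n : ℕ, ((-1 : ℂ) ^ n * z ^ (2 * (n : ℂ) + (ν : ℂ))) /
    ((2 : ℂ) ^ (2 * (n : ℂ) + (ν : ℂ)) * (n.factorial : ℂ) * Complex.Gamma ((n : ℂ) + (ν : ℂ) + 1))

/-- Pochhammer symbol `(ν+1)_n = (ν+1)(ν+2)⋯(ν+n)`. -/
noncomputable def poch (ν : ℝ) (n : ℕ) : ℂ :=
  ∏ i ∈ Finset.range n, ((ν : ℂ) + 1 + (i : ℂ))

/-- Normalized Bessel function `g_ν(z) = 2^ν Γ(ν+1) z^{1-ν} J_ν(z)`. -/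
noncomputable def gnu (ν : ℝ) (z : ℂ) : ℂ :=
  (2 : ℂ) ^ (ν : ℂ) * Complex.Gamma ((ν : ℂ) + 1) * z ^ ((1 : ℂ) - (ν : ℂ)) * besselJ ν z

/-- Normalized Bessel function `h_ν(z) = 2^ν Γ(ν+1) z^{1-ν/2} J_ν(√z)`. -/
noncomputable def hnu (ν : ℝ) (z : ℂ) : ℂ :=
  (2 : ℂ) ^ (ν : ℂ) * Complex.Gamma ((ν : ℂ) + 1) * z ^ ((1 : ℂ) - (ν : ℂ) / 2) *
    besselJ ν (z ^ ((1 : ℂ) / 2))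

/-- Dini function `d_ν(z) = (1-ν)J_ν(z) + z J_ν'(z)`. -/
noncomputable def dnu (ν : ℝ) (z : ℂ) : ℂ :=
  (1 - (ν : ℂ)) * besselJ ν z + z * deriv (besselJ ν) z

/-- Dini function `e_ν(z) = (2-ν)J_ν(z) + z J_ν'(z)`. -/
noncomputable def enu (ν : ℝ) (z : ℂ) : ℂ :=
  (2 - (ν : ℂ)) * besselJ ν z + z * deriv (besselJ ν) z

/-- `Φ_ν(z) = g_ν'(z) + 2 z g_ν''(z)`. -/
noncomputable def PhiNu (ν : ℝ) (z : ℂ) : ℂ :=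
  deriv (gnu ν) z + 2 * z * deriv (deriv (gnu ν)) z

/-- `Θ_ν(z) = h_ν'(z) + 2 z h_ν''(z)`. -/
noncomputable def ThetaNu (ν : ℝ) (z : ℂ) : ℂ :=
  deriv (hnu ν) z + 2 * z * deriv (deriv (hnu ν)) z

open Filter Topology

noncomputable def bb (ν : ℝ) (n : ℕ) : ℂ :=
  ((-1 : ℂ) ^ n * Complex.Gamma ((ν : ℂ) + 1)) /
    ((4 : ℂ) ^ n * (n.factorial : ℂ) * Complex.Gamma ((n : ℂ) + (ν : ℂ) + 1))

lemma gamma_ne (ν : ℝ) (hν : -1 < ν) (n : ℕ) : Complex.Gamma ((n : ℂ) + (ν : ℂ) + 1) ≠ 0 := by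
  have h : ((n : ℂ) + (ν : ℂ) + 1) = ((n + ν + 1 : ℝ) : ℂ) := by push_cast; ring
  rw [h, Complex.Gamma_ofReal]
  have : 0 < Real.Gamma (n + ν + 1) := Real.Gamma_pos_of_pos (by have := Nat.cast_nonneg (α:=ℝ) n; linarith)
  exact_mod_cast this.ne'

lemma bb_succ (ν : ℝ) (hν : -1 < ν) (n : ℕ) :
    bb ν (n + 1) = -bb ν n / (4 * ((n : ℂ) + 1) * ((n : ℂ) + (ν : ℂ) + 1)) := by
  have hg := gamma_ne ν hν n
  have hrec : Complex.Gamma (((n+1) : ℕ) + (ν : ℂ) + 1)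
      = ((n : ℂ) + (ν : ℂ) + 1) * Complex.Gamma ((n : ℂ) + (ν : ℂ) + 1) := by
    have := Complex.Gamma_add_one ((n : ℂ) + (ν : ℂ) + 1) (by
      have h : ((n : ℂ) + (ν : ℂ) + 1) = ((n + ν + 1 : ℝ) : ℂ) := by push_cast; ring
      rw [h]
      exact_mod_cast (by have := Nat.cast_nonneg (α:=ℝ) n; linarith : (0:ℝ) < n + ν + 1).ne')
    rw [← this]; push_cast; ring_nf
  simp only [bb, hrec]
  have h4 : ((4:ℂ))^(n+1) = 4 * 4^n := by ring
  have hf : (((n+1).factorial : ℂ)) = ((n:ℂ)+1) * (n.factorial : ℂ) := by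
    push_cast [Nat.factorial_succ]; ring
  rw [h4, hf]
  have hn1 : ((n:ℂ)+1) ≠ 0 := Nat.cast_add_one_ne_zero n
  have hfac : (n.factorial : ℂ) ≠ 0 := by exact_mod_cast (Nat.factorial_ne_zero n)
  have hx : ((n : ℂ) + (ν : ℂ) + 1) ≠ 0 := by
    have h : ((n : ℂ) + (ν : ℂ) + 1) = ((n + ν + 1 : ℝ) : ℂ) := by push_cast; ring
    rw [h]; exact_mod_cast (by have := Nat.cast_nonneg (α:=ℝ) n; linarith : (0:ℝ) < n + ν + 1).ne'
  field_simp
  ring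

lemma norm_bb_succ (ν : ℝ) (hν : -1 < ν) (n : ℕ) :
    ‖bb ν (n + 1)‖ = ‖bb ν n‖ / (4 * ((n:ℝ) + 1) * ((n:ℝ) + ν + 1)) := by
  rw [bb_succ ν hν n]
  rw [norm_div, norm_neg]
  congr 1
  have h : (4 * ((n : ℂ) + 1) * ((n : ℂ) + (ν : ℂ) + 1)) = ((4 * ((n:ℝ)+1) * ((n:ℝ)+ν+1) : ℝ) : ℂ) := by
    push_cast; ring
  rw [h, Complex.norm_real]
  have hpos : (0:ℝ) < 4 * ((n:ℝ)+1) * ((n:ℝ)+ν+1) := by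
    have := Nat.cast_nonneg (α:=ℝ) n; nlinarith
  exact abs_of_pos hpos

lemma summable_W (ν : ℝ) (hν : -1 < ν) (r : ℝ) (hr : 0 ≤ r) :
    Summable (fun n : ℕ => ‖bb ν n‖ * ((n:ℝ)+1)^2 * r^n) := by
  apply summable_of_ratio_norm_eventually_le (r := 1/2) (by norm_num)
  filter_upwards [Filter.eventually_atTop.2 ⟨⌈2*r⌉₊ + 1, fun n hn => hn⟩] with n hn
  have hn1 : (1:ℝ) ≤ (n:ℝ) := by
    have : (1:ℕ) ≤ n := le_trans (Nat.le_add_left 1 _) hn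
    exact_mod_cast this
  have hrn : 2*r ≤ (n:ℝ) := by
    have h1 : (⌈2*r⌉₊ : ℝ) ≤ n := by exact_mod_cast le_trans (Nat.le_succ _) hn
    exact le_trans (Nat.le_ceil _) h1
  have hb : 0 ≤ ‖bb ν n‖ := norm_nonneg _
  have hrp : 0 ≤ r^n := pow_nonneg hr n
  have hD : (0:ℝ) < 4 * ((n:ℝ) + 1) * ((n:ℝ) + ν + 1) := by nlinarith
  rw [Real.norm_of_nonneg (by positivity), Real.norm_of_nonneg (by positivity)]
  rw [norm_bb_succ ν hν n]
  have key : ((n:ℝ)+1+1)^2 * r ≤ (1/2) * (((n:ℝ)+1)^2) * (4 * ((n:ℝ) + 1) * ((n:ℝ) + ν + 1)) := by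
    nlinarith [sq_nonneg ((n:ℝ)+1), sq_nonneg ((n:ℝ)-1)]
  have expand : ‖bb ν n‖ / (4 * ((n:ℝ) + 1) * ((n:ℝ) + ν + 1)) * ((n:ℝ)+1+1)^2 * r^(n+1)
      = (‖bb ν n‖ * r^n) * ((((n:ℝ)+1+1)^2 * r) / (4 * ((n:ℝ) + 1) * ((n:ℝ) + ν + 1))) := by
    field_simp; ring
  have expand2 : 1/2 * (‖bb ν n‖ * ((n:ℝ)+1)^2 * r^n)
      = (‖bb ν n‖ * r^n) * ((1/2) * ((n:ℝ)+1)^2) := by ring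
  push_cast
  calc ‖bb ν n‖ / (4 * ((n:ℝ) + 1) * ((n:ℝ) + ν + 1)) * ((n:ℝ)+1+1)^2 * r^(n+1)
      = (‖bb ν n‖ * r^n) * ((((n:ℝ)+1+1)^2 * r) / (4 * ((n:ℝ) + 1) * ((n:ℝ) + ν + 1))) := expand
    _ ≤ (‖bb ν n‖ * r^n) * ((1/2) * ((n:ℝ)+1)^2) := by
        apply mul_le_mul_of_nonneg_left _ (by positivity)
        rw [div_le_iff₀ hD]
        calc (((n:ℝ)+1+1)^2 * r) ≤ (1/2) * (((n:ℝ)+1)^2) * (4 * ((n:ℝ) + 1) * ((n:ℝ) + ν + 1)) := key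
          _ = (1/2) * ((n:ℝ)+1)^2 * (4 * ((n:ℝ) + 1) * ((n:ℝ) + ν + 1)) := by ring
    _ = 1/2 * (‖bb ν n‖ * ((n:ℝ)+1)^2 * r^n) := by ring

lemma summable_auxR (ν : ℝ) (hν : -1 < ν) (c : ℕ → ℝ) (hc0 : ∀ n, 0 ≤ c n)
    (hc : ∀ n, c n ≤ 15*((n:ℝ)+1)^2) (r : ℝ) (hr : 0 ≤ r) :
    Summable (fun n : ℕ => ‖bb ν n‖ * c n * r^(2*n)) := by
  have hsum : Summable (fun n : ℕ => 15 * (‖bb ν n‖ * ((n:ℝ)+1)^2 * (r^2)^n)) :=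
    (summable_W ν hν (r^2) (by positivity)).mul_left 15
  have hb : ∀ n : ℕ, ‖bb ν n‖ * c n * r^(2*n) ≤ 15 * (‖bb ν n‖ * ((n:ℝ)+1)^2 * (r^2)^n) := by
    intro n
    rw [pow_mul]
    calc ‖bb ν n‖ * c n * (r^2)^n ≤ ‖bb ν n‖ * (15*((n:ℝ)+1)^2) * (r^2)^n := by
          apply mul_le_mul_of_nonneg_right _ (by positivity)
          exact mul_le_mul_of_nonneg_left (hc n) (norm_nonneg _)
      _ = 15 * (‖bb ν n‖ * ((n:ℝ)+1)^2 * (r^2)^n) := by ring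
  exact Summable.of_nonneg_of_le (fun n => mul_nonneg (mul_nonneg (norm_nonneg _) (hc0 n)) (by positivity)) hb hsum

lemma summable_auxC (ν : ℝ) (hν : -1 < ν) (c : ℕ → ℂ)
    (hc : ∀ n, ‖c n‖ ≤ 15*((n:ℝ)+1)^2) (z : ℂ) :
    Summable (fun n : ℕ => bb ν n * c n * z^(2*n)) := by
  apply Summable.of_norm
  have := summable_auxR ν hν (fun n => ‖c n‖) (fun n => norm_nonneg _) hc ‖z‖ (norm_nonneg _)
  apply this.congr
  intro n
  simp [norm_mul, norm_pow]

noncomputable def F0 (ν : ℝ) (z : ℂ) : ℂ := ∑' n : ℕ, bb ν n * z^(2*n+1)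
noncomputable def F1 (ν : ℝ) (z : ℂ) : ℂ := ∑' n : ℕ, bb ν n * ((2*(n:ℂ)+1) * z^(2*n))
noncomputable def F2 (ν : ℝ) (z : ℂ) : ℂ :=
  ∑' n : ℕ, bb ν n * ((2*(n:ℂ)+1) * ((2*(n:ℂ)) * z^(2*n-1)))

lemma F0_hasDeriv (ν : ℝ) (hν : -1 < ν) (z : ℂ) : HasDerivAt (F0 ν) (F1 ν z) z := by
  set R : ℝ := ‖z‖ + 1 with hR
  have hR1 : (1:ℝ) ≤ R := by have := norm_nonneg z; simp only [hR]; linarith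
  have hR0 : (0:ℝ) < R := by linarith
  have hzR : z ∈ Metric.ball (0:ℂ) R := by
    rw [mem_ball_zero_iff]; simp only [hR]; linarith
  have := hasDerivAt_tsum_of_isPreconnected
    (u := fun n : ℕ => ‖bb ν n‖ * ((2*(n:ℝ)+1) * R^(2*n)))
    (g := fun n (y:ℂ) => bb ν n * y^(2*n+1))
    (g' := fun n (y:ℂ) => bb ν n * ((2*(n:ℂ)+1) * y^(2*n)))
    (t := Metric.ball (0:ℂ) R) (y₀ := 0) (y := z)
    ?_ Metric.isOpen_ball (convex_ball (0:ℂ) R).isPreconnected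
    ?_ ?_ (by simp [hR0]) ?_ hzR
  · exact this
  · have : ∀ n : ℕ, ‖bb ν n‖ * ((2*(n:ℝ)+1) * R^(2*n)) = ‖bb ν n‖ * (2*(n:ℝ)+1) * R^(2*n) := by
      intro n; ring
    rw [funext this]
    have hcle : ∀ n : ℕ, 2*(n:ℝ)+1 ≤ 15*((n:ℝ)+1)^2 := by
      intro n; nlinarith [Nat.cast_nonneg (α:=ℝ) n, sq_nonneg (n:ℝ)]
    exact summable_auxR ν hν (fun n => 2*(n:ℝ)+1) (fun n => by positivity) hcle R (le_of_lt hR0)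
  · intro n y _
    have h := (hasDerivAt_pow (2*n+1) y).const_mul (bb ν n)
    refine h.congr_deriv ?_
    push_cast [Nat.add_sub_cancel]
    ring
  · intro n y hy
    have hyR : ‖y‖ ≤ R := le_of_lt (by simpa [hR] using mem_ball_zero_iff.mp hy)
    calc ‖bb ν n * ((2*(n:ℂ)+1) * y^(2*n))‖ = ‖bb ν n‖ * (‖(2*(n:ℂ)+1)‖ * ‖y‖^(2*n)) := by
          simp [norm_mul, norm_pow]
      _ ≤ ‖bb ν n‖ * ((2*(n:ℝ)+1) * R^(2*n)) := by
          apply mul_le_mul_of_nonneg_left _ (norm_nonneg _)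
          have h1 : ‖(2*(n:ℂ)+1)‖ = 2*(n:ℝ)+1 := by
            rw [show (2*(n:ℂ)+1) = ((2*n+1 : ℕ):ℂ) by push_cast; ring,
              Complex.norm_natCast]
            push_cast; ring
          rw [h1]
          exact mul_le_mul_of_nonneg_left (pow_le_pow_left₀ (norm_nonneg _) hyR _) (by positivity)
  · apply summable_zero.congr
    intro n
    simp [zero_pow (by omega : 2*n+1 ≠ 0)]

lemma F1_hasDeriv (ν : ℝ) (hν : -1 < ν) (z : ℂ) : HasDerivAt (F1 ν) (F2 ν z) z := by
  set R : ℝ := ‖z‖ + 1 with hR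
  have hR1 : (1:ℝ) ≤ R := by have := norm_nonneg z; simp only [hR]; linarith
  have hR0 : (0:ℝ) < R := by linarith
  have hzR : z ∈ Metric.ball (0:ℂ) R := by
    rw [mem_ball_zero_iff]; simp only [hR]; linarith
  have := hasDerivAt_tsum_of_isPreconnected
    (u := fun n : ℕ => ‖bb ν n‖ * ((2*(n:ℝ)+1)*(2*(n:ℝ))) * R^(2*n))
    (g := fun n (y:ℂ) => bb ν n * ((2*(n:ℂ)+1) * y^(2*n)))
    (g' := fun n (y:ℂ) => bb ν n * ((2*(n:ℂ)+1) * ((2*(n:ℂ)) * y^(2*n-1))))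
    (t := Metric.ball (0:ℂ) R) (y₀ := 0) (y := z)
    ?_ Metric.isOpen_ball (convex_ball (0:ℂ) R).isPreconnected
    ?_ ?_ (by simp [hR0]) ?_ hzR
  · exact this
  · have hcle : ∀ n : ℕ, (2*(n:ℝ)+1)*(2*(n:ℝ)) ≤ 15*((n:ℝ)+1)^2 := by
      intro n; nlinarith [Nat.cast_nonneg (α:=ℝ) n, sq_nonneg (n:ℝ)]
    exact summable_auxR ν hν (fun n => (2*(n:ℝ)+1)*(2*(n:ℝ))) (fun n => by positivity) hcle
      R (le_of_lt hR0)
  · intro n y _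
    have h := (hasDerivAt_pow (2*n) y).const_mul (bb ν n * (2*(n:ℂ)+1))
    have hc : ((2*n : ℕ):ℂ) = 2*(n:ℂ) := by push_cast; ring
    rw [hc] at h
    simpa [mul_assoc] using h
  · intro n y hy
    have hyR : ‖y‖ ≤ R := le_of_lt (by simpa [hR] using mem_ball_zero_iff.mp hy)
    have h1 : ‖(2*(n:ℂ)+1)‖ = 2*(n:ℝ)+1 := by
      rw [show (2*(n:ℂ)+1) = ((2*n+1 : ℕ):ℂ) by push_cast; ring, Complex.norm_natCast]
      push_cast; ring
    have h2 : ‖(2*(n:ℂ))‖ = 2*(n:ℝ) := by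
      rw [show (2*(n:ℂ)) = ((2*n : ℕ):ℂ) by push_cast; ring, Complex.norm_natCast]
      push_cast; ring
    have hynorm : ‖y‖^(2*n-1) ≤ R^(2*n) :=
      le_trans (pow_le_pow_left₀ (norm_nonneg _) hyR _) (pow_le_pow_right₀ hR1 (Nat.sub_le (2*n) 1))
    calc ‖bb ν n * ((2*(n:ℂ)+1) * ((2*(n:ℂ)) * y^(2*n-1)))‖
        = ‖bb ν n‖ * ((2*(n:ℝ)+1) * ((2*(n:ℝ)) * ‖y‖^(2*n-1))) := by
          simp [norm_mul, norm_pow, h1, h2]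
      _ ≤ ‖bb ν n‖ * ((2*(n:ℝ)+1)*(2*(n:ℝ))) * R^(2*n) := by
          rw [show ‖bb ν n‖ * ((2*(n:ℝ)+1) * ((2*(n:ℝ)) * ‖y‖^(2*n-1)))
              = ‖bb ν n‖ * ((2*(n:ℝ)+1)*(2*(n:ℝ))) * ‖y‖^(2*n-1) by ring]
          exact mul_le_mul_of_nonneg_left hynorm (by positivity)
  · apply summable_of_ne_finset_zero (s := ({0} : Finset ℕ))
    intro n hn
    have : n ≠ 0 := by simpa using hn
    simp [zero_pow (by omega : 2*n ≠ 0)]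

lemma gnu_eq (ν : ℝ) (hν : -1 < ν) (z : ℂ) (hz : z ≠ 0) : gnu ν z = F0 ν z := by
  rw [gnu, besselJ, ← tsum_mul_left, F0]
  refine tsum_congr fun n => ?_
  have hgam := gamma_ne ν hν n
  have hgam0 : Complex.Gamma ((ν:ℂ) + 1) ≠ 0 := by
    have := gamma_ne ν hν 0
    simpa using this
  have e1 : z ^ ((1:ℂ) - ν) * z ^ (2*(n:ℂ) + ν) = z^(2*n+1) := by
    rw [← Complex.cpow_add _ _ hz,
      show (1:ℂ) - ν + (2*(n:ℂ) + ν) = ((2*n+1 : ℕ):ℂ) by push_cast; ring,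
      Complex.cpow_natCast]
  have e2 : (2:ℂ) ^ (2*(n:ℂ) + ν) = 4^n * 2^(ν:ℂ) := by
    rw [show (2*(n:ℂ) + ν) = ((2*n : ℕ):ℂ) + ν by push_cast; ring,
      Complex.cpow_add _ _ two_ne_zero, Complex.cpow_natCast, pow_mul]
    norm_num
  have h2ν : (2:ℂ)^(ν:ℂ) ≠ 0 := by
    intro h
    exact two_ne_zero (Complex.cpow_eq_zero_iff _ _ |>.mp h).1
  have h4 : ((4:ℂ))^n ≠ 0 := pow_ne_zero _ (by norm_num)
  have hf : (n.factorial : ℂ) ≠ 0 := by exact_mod_cast (Nat.factorial_ne_zero n)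
  rw [bb, e2]
  field_simp
  linear_combination e1

noncomputable def aa (ν : ℝ) (n : ℕ) : ℂ := bb ν n * ((2*(n:ℂ)+1) * (4*(n:ℂ)+1))

lemma norm_two_n_one (n : ℕ) : ‖(2*(n:ℂ)+1)‖ = 2*(n:ℝ)+1 := by
  rw [show (2*(n:ℂ)+1) = ((2*n+1 : ℕ):ℂ) by push_cast; ring, Complex.norm_natCast]
  push_cast; ring

lemma summable_F1_terms (ν : ℝ) (hν : -1 < ν) (z : ℂ) :
    Summable (fun n : ℕ => bb ν n * ((2*(n:ℂ)+1) * z^(2*n))) := by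
  have h := summable_auxC ν hν (fun n => 2*(n:ℂ)+1)
    (fun n => by rw [norm_two_n_one]; nlinarith [Nat.cast_nonneg (α:=ℝ) n, sq_nonneg (n:ℝ)]) z
  exact h.congr fun n => by simp [mul_assoc]

lemma summable_aa_terms (ν : ℝ) (hν : -1 < ν) (z : ℂ) :
    Summable (fun n : ℕ => aa ν n * z^(2*n)) := by
  have hb : ∀ n : ℕ, ‖((2*(n:ℂ)+1) * (4*(n:ℂ)+1))‖ ≤ 15*((n:ℝ)+1)^2 := by
    intro n
    rw [norm_mul, norm_two_n_one,
      show (4*(n:ℂ)+1) = ((4*n+1 : ℕ):ℂ) by push_cast; ring, Complex.norm_natCast]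
    push_cast
    nlinarith [Nat.cast_nonneg (α:=ℝ) n, sq_nonneg (n:ℝ)]
  have h := summable_auxC ν hν (fun n => (2*(n:ℂ)+1) * (4*(n:ℂ)+1)) hb z
  exact h.congr fun n => by simp [aa, mul_assoc]

lemma Phi_eq (ν : ℝ) (hν : -1 < ν) (z : ℂ) (hz : z ≠ 0) :
    PhiNu ν z = ∑' n : ℕ, aa ν n * z^(2*n) := by
  have hmem : {(0:ℂ)}ᶜ ∈ 𝓝 z := isOpen_compl_singleton.mem_nhds (by simpa using hz)
  have hev : gnu ν =ᶠ[𝓝 z] F0 ν := by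
    filter_upwards [hmem] with w hw
    exact gnu_eq ν hν w (by simpa using hw)
  have hd1 : deriv (gnu ν) z = F1 ν z := by
    rw [hev.deriv_eq]; exact (F0_hasDeriv ν hν z).deriv
  have hev2 : deriv (gnu ν) =ᶠ[𝓝 z] F1 ν := by
    filter_upwards [hmem] with w hw
    have hmemw : {(0:ℂ)}ᶜ ∈ 𝓝 w := isOpen_compl_singleton.mem_nhds hw
    have hevw : gnu ν =ᶠ[𝓝 w] F0 ν := by
      filter_upwards [hmemw] with v hv
      exact gnu_eq ν hν v (by simpa using hv)
    rw [hevw.deriv_eq]; exact (F0_hasDeriv ν hν w).deriv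
  have hd2 : deriv (deriv (gnu ν)) z = F2 ν z := by
    rw [hev2.deriv_eq]; exact (F1_hasDeriv ν hν z).deriv
  rw [PhiNu, hd1, hd2, F1, F2, ← tsum_mul_left]
  have S1 := summable_F1_terms ν hν z
  have S2 : Summable (fun n : ℕ => 2*z*(bb ν n * ((2*(n:ℂ)+1) * ((2*(n:ℂ)) * z^(2*n-1))))) := by
    have hb : ∀ n : ℕ, ‖(2*(2*(n:ℂ)+1) * (2*(n:ℂ)))‖ ≤ 15*((n:ℝ)+1)^2 := by
      intro n
      rw [show (2*(2*(n:ℂ)+1) * (2*(n:ℂ))) = ((2*(2*n+1)*(2*n) : ℕ):ℂ) by push_cast; ring,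
        Complex.norm_natCast]
      push_cast
      nlinarith [Nat.cast_nonneg (α:=ℝ) n, sq_nonneg (n:ℝ)]
    have h := summable_auxC ν hν (fun n => 2*(2*(n:ℂ)+1) * (2*(n:ℂ))) hb z
    apply h.congr
    intro n
    cases n with
    | zero => simp
    | succ k =>
      have hexp : 2*(k+1)-1 = 2*k+1 := by omega
      rw [hexp]
      have hpow : z^(2*(k+1)) = z^(2*k+1) * z := by
        rw [show 2*(k+1) = 2*k+1+1 by omega, pow_succ]
      rw [hpow]
      ring
  rw [← Summable.tsum_add S1 S2]
  refine tsum_congr fun n => ?_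
  cases n with
  | zero => simp [aa]
  | succ k =>
    have hexp : 2*(k+1)-1 = 2*k+1 := by omega
    rw [hexp, aa]
    have hpow : z^(2*(k+1)) = z^(2*k+1) * z := by
      rw [show 2*(k+1) = 2*k+1+1 by omega, pow_succ]
    rw [hpow]
    push_cast
    ring

lemma bb_zero (ν : ℝ) (hν : -1 < ν) : bb ν 0 = 1 := by
  have hgam0 : Complex.Gamma ((ν:ℂ) + 1) ≠ 0 := by simpa using gamma_ne ν hν 0
  simp [bb]
  exact hgam0

lemma aa_zero (ν : ℝ) (hν : -1 < ν) : aa ν 0 = 1 := by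
  simp [aa, bb_zero ν hν]

lemma hν1 (ν : ℝ) (hν : -1 < ν) : ((ν:ℂ) + 1) ≠ 0 := by
  rw [show ((ν:ℂ)+1) = ((ν+1 : ℝ):ℂ) by push_cast; ring]
  exact_mod_cast (by linarith : (0:ℝ) < ν + 1).ne'

lemma aa_one (ν : ℝ) (hν : -1 < ν) : aa ν 1 = -(15/(4*((ν:ℂ)+1))) := by
  have hgam0 : Complex.Gamma ((ν:ℂ) + 1) ≠ 0 := by simpa using gamma_ne ν hν 0
  have hrec : Complex.Gamma ((1:ℕ) + (ν:ℂ) + 1) = ((ν:ℂ)+1) * Complex.Gamma ((ν:ℂ) + 1) := by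
    have := Complex.Gamma_add_one ((ν:ℂ)+1) (hν1 ν hν)
    rw [← this]; norm_num; ring_nf
  rw [aa, bb, hrec]
  have h1 : ((ν:ℂ)+1) ≠ 0 := hν1 ν hν
  push_cast
  field_simp
  ring

lemma summable_norm_aa (ν : ℝ) (hν : -1 < ν) : Summable (fun n : ℕ => ‖aa ν n‖) := by
  have hb : ∀ n : ℕ, ‖((2*(n:ℂ)+1) * (4*(n:ℂ)+1))‖ ≤ 15*((n:ℝ)+1)^2 := by
    intro n
    rw [norm_mul, norm_two_n_one,
      show (4*(n:ℂ)+1) = ((4*n+1 : ℕ):ℂ) by push_cast; ring, Complex.norm_natCast]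
    push_cast
    nlinarith [Nat.cast_nonneg (α:=ℝ) n, sq_nonneg (n:ℝ)]
  have h := summable_auxR ν hν (fun n => ‖(2*(n:ℂ)+1) * (4*(n:ℂ)+1)‖)
    (fun n => norm_nonneg _) hb 1 zero_le_one
  apply h.congr
  intro n
  simp [aa, norm_mul]

noncomputable def Ca (ν : ℝ) : ℝ := ∑' n : ℕ, ‖aa ν (n+2)‖

lemma Ca_nonneg (ν : ℝ) : 0 ≤ Ca ν := tsum_nonneg fun n => norm_nonneg _

set_option maxHeartbeats 1000000 in
lemma tail_bound (ν : ℝ) (hν : -1 < ν) (z : ℂ) (hz1 : ‖z‖ ≤ 1) :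
    ‖(∑' n : ℕ, aa ν n * z^(2*n)) - 1 - aa ν 1 * z^2‖ ≤ Ca ν * ‖z‖^4 := by
  have S := summable_aa_terms ν hν z
  have S1 : Summable (fun n : ℕ => aa ν (n+1) * z^(2*(n+1))) := (summable_nat_add_iff 1).2 S
  have SN := summable_norm_aa ν hν
  have SN2 : Summable (fun n : ℕ => ‖aa ν (n+2)‖) := (summable_nat_add_iff 2).2 SN
  have hshift : ∑' n : ℕ, aa ν n * z^(2*n)
      = 1 + aa ν 1 * z^2 + ∑' n : ℕ, aa ν (n+2) * z^(2*(n+2)) := by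
    rw [Summable.tsum_eq_zero_add S, Summable.tsum_eq_zero_add S1, aa_zero ν hν]
    have e1 : (1:ℂ) * z^(2*0) = 1 := by norm_num
    have e2 : aa ν (0+1) * z^(2*(0+1)) = aa ν 1 * z^2 := by norm_num
    have e3 : ∑' n : ℕ, aa ν (n+1+1) * z^(2*(n+1+1)) = ∑' n : ℕ, aa ν (n+2) * z^(2*(n+2)) := by
      refine tsum_congr fun n => ?_
      rw [show n+1+1 = n+2 from by omega]
    rw [e1, e2, e3]
    ring
  rw [hshift]
  have e4 : (1 + aa ν 1 * z^2 + ∑' n : ℕ, aa ν (n+2) * z^(2*(n+2))) - 1 - aa ν 1 * z^2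
      = ∑' n : ℕ, aa ν (n+2) * z^(2*(n+2)) := by ring
  rw [e4]
  have hterm : ∀ n : ℕ, ‖aa ν (n+2) * z^(2*(n+2))‖ ≤ ‖aa ν (n+2)‖ * ‖z‖^4 := by
    intro n
    rw [norm_mul, norm_pow]
    apply mul_le_mul_of_nonneg_left _ (norm_nonneg _)
    calc ‖z‖^(2*(n+2)) = ‖z‖^(2*n) * ‖z‖^4 := by
          rw [show 2*(n+2) = 2*n+4 from by omega, pow_add]
      _ ≤ 1 * ‖z‖^4 := by
          apply mul_le_mul_of_nonneg_right _ (by positivity)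
          exact pow_le_one₀ (norm_nonneg _) hz1
      _ = ‖z‖^4 := one_mul _
  calc ‖∑' n : ℕ, aa ν (n+2) * z^(2*(n+2))‖ ≤ ∑' n : ℕ, ‖aa ν (n+2)‖ * ‖z‖^4 := by
        apply tsum_of_norm_bounded _ hterm
        exact (SN2.mul_right _).hasSum
    _ = Ca ν * ‖z‖^4 := by rw [tsum_mul_right]; simp [Ca]

lemma one_add_sum_le_prod (x : ℕ → ℝ) (hx : ∀ n, 0 ≤ x n) (s : Finset ℕ) :
    1 + ∑ i ∈ s, x i ≤ ∏ i ∈ s, (1 + x i) := by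
  classical
  induction s using Finset.cons_induction with
  | empty => simp
  | cons a s ha ih =>
    rw [Finset.sum_cons, Finset.prod_cons]
    have h1 : 0 ≤ ∑ i ∈ s, x i := Finset.sum_nonneg fun i _ => hx i
    have h2 : 1 + ∑ i ∈ s, x i ≤ ∏ i ∈ s, (1 + x i) := ih
    nlinarith [hx a]

lemma prod_le_exp_sum (x : ℕ → ℝ) (hx : ∀ n, 0 ≤ x n) (s : Finset ℕ) :
    ∏ i ∈ s, (1 + x i) ≤ Real.exp (∑ i ∈ s, x i) := by
  rw [Real.exp_sum]
  apply Finset.prod_le_prod (fun i _ => by linarith [hx i]) (fun i _ => by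
    linarith [Real.add_one_le_exp (x i)])

lemma prod_bounds (x : ℕ → ℝ) (hx : ∀ n, 0 ≤ x n) (hsx : Summable x) :
    Multipliable (fun n => 1 + x n) ∧
      1 + ∑' n, x n ≤ (∏' n, (1 + x n)) ∧ (∏' n, (1 + x n)) ≤ Real.exp (∑' n, x n) := by
  have hub : ∀ s : Finset ℕ, ∏ i ∈ s, (1 + x i) ≤ Real.exp (∑' n, x n) := by
    intro s
    refine le_trans (prod_le_exp_sum x hx s) (Real.exp_le_exp.2 ?_)
    exact Summable.sum_le_tsum s (fun i _ => hx i) hsx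
  have hmono : Monotone (fun s : Finset ℕ => ∏ i ∈ s, (1 + x i)) := by
    intro s u hsu
    show ∏ i ∈ s, (1 + x i) ≤ ∏ i ∈ u, (1 + x i)
    have hs0 : 0 ≤ ∏ i ∈ s, (1 + x i) := Finset.prod_nonneg fun i _ => by linarith [hx i]
    have h1 : 1 ≤ ∏ i ∈ u \ s, (1 + x i) := by
      have := one_add_sum_le_prod x hx (u \ s)
      have h2 : 0 ≤ ∑ i ∈ u \ s, x i := Finset.sum_nonneg fun i _ => hx i
      linarith
    calc ∏ i ∈ s, (1 + x i) = (∏ i ∈ s, (1 + x i)) * 1 := (mul_one _).symm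
      _ ≤ (∏ i ∈ s, (1 + x i)) * ∏ i ∈ u \ s, (1 + x i) :=
          mul_le_mul_of_nonneg_left h1 hs0
      _ = ∏ i ∈ u, (1 + x i) := by rw [mul_comm, Finset.prod_sdiff hsu]
  have hbdd : BddAbove (Set.range (fun s : Finset ℕ => ∏ i ∈ s, (1 + x i))) := by
    refine ⟨Real.exp (∑' n, x n), ?_⟩
    rintro y ⟨s, rfl⟩
    exact hub s
  have hHP : HasProd (fun n => 1 + x n) (⨆ s : Finset ℕ, ∏ i ∈ s, (1 + x i)) :=
    tendsto_atTop_ciSup hmono hbdd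
  have hM : Multipliable (fun n => 1 + x n) := ⟨_, hHP⟩
  refine ⟨hM, ?_, ?_⟩
  · have h1 : Filter.Tendsto (fun m => 1 + ∑ i ∈ Finset.range m, x i) Filter.atTop
        (𝓝 (1 + ∑' n, x n)) := (hsx.hasSum.tendsto_sum_nat).const_add 1
    have h2 : Filter.Tendsto (fun m => ∏ i ∈ Finset.range m, (1 + x i)) Filter.atTop
        (𝓝 (∏' n, (1 + x n))) := hM.hasProd.tendsto_prod_nat
    exact le_of_tendsto_of_tendsto' h1 h2 (fun m => one_add_sum_le_prod x hx _)
  · exact le_of_tendsto' hM.hasProd (fun s => hub s)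

lemma not_mult_complex (x : ℕ → ℝ) (hx : ∀ n, 0 ≤ x n) (hns : ¬ Summable x) :
    ¬ Multipliable (fun n => ((1 + x n : ℝ) : ℂ)) := by
  intro hM
  have hdiv : Filter.Tendsto (fun m => ∑ i ∈ Finset.range m, x i) Filter.atTop Filter.atTop :=
    (not_summable_iff_tendsto_nat_atTop_of_nonneg hx).1 hns
  have h2 : Filter.Tendsto (fun m => ∏ i ∈ Finset.range m, ((1 + x i : ℝ) : ℂ)) Filter.atTop
      (𝓝 (∏' n, ((1 + x n : ℝ) : ℂ))) := hM.hasProd.tendsto_prod_nat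
  have hnorm : Filter.Tendsto (fun m => ‖∏ i ∈ Finset.range m, ((1 + x i : ℝ) : ℂ)‖)
      Filter.atTop (𝓝 ‖∏' n, ((1 + x n : ℝ) : ℂ)‖) := h2.norm
  have hge : ∀ m, 1 + ∑ i ∈ Finset.range m, x i
      ≤ ‖∏ i ∈ Finset.range m, ((1 + x i : ℝ) : ℂ)‖ := by
    intro m
    rw [← Complex.ofReal_prod, Complex.norm_real]
    refine le_trans (one_add_sum_le_prod x hx _) (le_abs_self _)
  have hdiv2 : Filter.Tendsto (fun m => ‖∏ i ∈ Finset.range m, ((1 + x i : ℝ) : ℂ)‖)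
      Filter.atTop Filter.atTop := by
    apply Filter.tendsto_atTop_mono hge
    exact Filter.tendsto_atTop_add_const_left _ 1 hdiv
  exact not_tendsto_atTop_of_tendsto_nhds hnorm hdiv2

/-- with `Φ_ν(z) = Π_{n≥1}(1 - z²/γ_{ν,n}²)`, the first Rayleigh-type sum
satisfies `ω₁ = Σ γ_{ν,n}^{-2} = 15/(4(ν+1))`. -/
theorem omega_one_eq (ν : ℝ) (hν : -1 < ν) (γ : ℕ → ℝ)
    (hpos : ∀ n, 0 < γ n) (hmono : StrictMono γ)
    (hprod : ∀ z : ℂ, PhiNu ν z = ∏' n : ℕ, (1 - z ^ 2 / ((γ n : ℂ)) ^ 2)) :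
    ∑' n : ℕ, 1 / (γ n) ^ 2 = 15 / (4 * (ν + 1)) := by

  have hν1R : (0:ℝ) < ν + 1 := by linarith
  set f : ℕ → ℝ := fun n => 1 / (γ n) ^ 2 with hfdef
  have hf0 : ∀ n, 0 < f n := fun n => by
    have := hpos n; simp only [hfdef]; positivity
  set A : ℝ := 15 / (4 * (ν + 1)) with hAdef
  have hA0 : 0 < A := by rw [hAdef]; positivity
  have hCa := Ca_nonneg ν
  have cancel : ∀ (X c : ℝ), c ≠ 0 → c * (X / (2*c)) = X / 2 := by
    intro X c hc; field_simp
  -- the key estimate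
  have star : ∀ t : ℝ, 0 < t → t ≤ 1 →
      ‖(∏' n : ℕ, ((1 + t^2 * f n : ℝ) : ℂ)) - ((1 + A * t^2 : ℝ) : ℂ)‖ ≤ Ca ν * t^4 := by
    intro t ht0 ht1
    have hz : (Complex.I * (t:ℂ)) ≠ 0 :=
      mul_ne_zero Complex.I_ne_zero (Complex.ofReal_ne_zero.2 ht0.ne')
    have hnz : ‖Complex.I * (t:ℂ)‖ = t := by
      rw [norm_mul, Complex.norm_I, Complex.norm_real, one_mul, Real.norm_eq_abs, _root_.abs_of_pos ht0]
    have hsq : (Complex.I * (t:ℂ))^2 = -((t:ℂ)^2) := by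
      rw [mul_pow, Complex.I_sq]; ring
    have hfac : ∀ n : ℕ, (1 : ℂ) - (Complex.I * (t:ℂ))^2 / ((γ n : ℂ))^2
        = ((1 + t^2 * f n : ℝ) : ℂ) := by
      intro n
      have hγn : ((γ n : ℝ) : ℂ) ≠ 0 := Complex.ofReal_ne_zero.2 (hpos n).ne'
      rw [hsq]
      simp only [hfdef]
      push_cast
      field_simp
      ring
    have hQ : (∏' n : ℕ, ((1 + t^2 * f n : ℝ) : ℂ))
        = ∑' n : ℕ, aa ν n * (Complex.I * (t:ℂ))^(2*n) := by
      rw [← tprod_congr hfac, ← hprod (Complex.I * (t:ℂ))]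
      exact Phi_eq ν hν _ hz
    have htail := tail_bound ν hν (Complex.I * (t:ℂ)) (by rw [hnz]; exact ht1)
    have hcast : (1:ℂ) + aa ν 1 * (Complex.I * (t:ℂ))^2 = ((1 + A * t^2 : ℝ) : ℂ) := by
      rw [aa_one ν hν, hsq, hAdef]
      push_cast
      ring
    have heq : (∑' n : ℕ, aa ν n * (Complex.I * (t:ℂ))^(2*n)) - 1
        - aa ν 1 * (Complex.I * (t:ℂ))^2
        = (∏' n : ℕ, ((1 + t^2 * f n : ℝ) : ℂ)) - ((1 + A * t^2 : ℝ) : ℂ) := by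
      rw [hQ, ← hcast]; ring
    rw [← heq]
    calc ‖_ - 1 - aa ν 1 * (Complex.I * (t:ℂ))^2‖ ≤ Ca ν * ‖Complex.I * (t:ℂ)‖^4 := htail
      _ = Ca ν * t^4 := by rw [hnz]
  by_cases hsum : Summable f
  · -- summable case
    set S : ℝ := ∑' n, f n with hSdef
    have hS0 : 0 ≤ S := tsum_nonneg fun n => (hf0 n).le
    show S = A
    by_contra hne
    have hd0 : 0 < |S - A| := abs_pos.2 (sub_ne_zero.2 hne)
    set t : ℝ := min 1 (min (1 / Real.sqrt (S+1))
      (Real.sqrt (|S - A| / (2 * (S^2 + Ca ν + 1))))) with htdef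
    have ht0 : 0 < t := by
      apply lt_min one_pos
      apply lt_min
      · positivity
      · apply Real.sqrt_pos.2; positivity
    have ht1 : t ≤ 1 := min_le_left _ _
    have htS : t^2 * S ≤ 1 := by
      have h1 : t ≤ 1 / Real.sqrt (S+1) := le_trans (min_le_right _ _) (min_le_left _ _)
      have h2 : t^2 ≤ (1 / Real.sqrt (S+1))^2 := by
        apply pow_le_pow_left₀ ht0.le h1
      have h3 : (1 / Real.sqrt (S+1))^2 = 1 / (S+1) := by
        rw [div_pow, one_pow, Real.sq_sqrt (by linarith)]
      rw [h3] at h2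
      calc t^2 * S ≤ (1/(S+1)) * S := mul_le_mul_of_nonneg_right h2 hS0
        _ ≤ 1 := by rw [div_mul_eq_mul_div, div_le_one (by linarith)]; linarith
    have ht2 : t^2 ≤ |S - A| / (2 * (S^2 + Ca ν + 1)) := by
      have h1 : t ≤ Real.sqrt (|S - A| / (2 * (S^2 + Ca ν + 1))) :=
        le_trans (min_le_right _ _) (min_le_right _ _)
      calc t^2 ≤ (Real.sqrt (|S - A| / (2 * (S^2 + Ca ν + 1))))^2 := pow_le_pow_left₀ ht0.le h1 2
        _ = |S - A| / (2 * (S^2 + Ca ν + 1)) := Real.sq_sqrt (by positivity)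
    -- product bounds
    have hsx : Summable (fun n => t^2 * f n) := hsum.mul_left _
    have hsxsum : ∑' n, t^2 * f n = t^2 * S := tsum_mul_left
    obtain ⟨hM, hlow, hup⟩ := prod_bounds (fun n => t^2 * f n)
      (fun n => by positivity) hsx
    rw [hsxsum] at hlow hup
    set P : ℝ := ∏' n, (1 + t^2 * f n) with hPdef
    have hQP : (∏' n : ℕ, ((1 + t^2 * f n : ℝ) : ℂ)) = (P : ℂ) := by
      have := (hM.hasProd.map Complex.ofRealHom Complex.continuous_ofReal).tprod_eq
      exact this
    have hstar := star t ht0 ht1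
    rw [hQP, ← Complex.ofReal_sub, Complex.norm_real] at hstar
    -- |P - (1 + S t^2)| ≤ (S t^2)^2
    have hexp : Real.exp (t^2*S) - 1 - t^2*S ≤ (t^2*S)^2 := by
      have hb := Real.exp_bound (x := t^2*S) (by rw [_root_.abs_of_nonneg (by positivity)]; exact htS)
        (n := 2) (by norm_num)
      have hsum2 : ∑ i ∈ Finset.range 2, (t^2*S)^i / (Nat.factorial i) = 1 + t^2*S := by
        simp [Finset.sum_range_succ]
      rw [hsum2] at hb
      have habs := le_of_abs_le hb
      have : |t^2*S|^2 * ((2+1)/((Nat.factorial 2)*2)) ≤ (t^2*S)^2 := by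
        rw [_root_.abs_of_nonneg (by positivity)]
        norm_num
        nlinarith [sq_nonneg (t^2*S)]
      norm_num at habs this ⊢
      linarith
    have hP1 : |P - (1 + S * t^2)| ≤ S^2 * t^4 := by
      rw [abs_le]
      constructor
      · nlinarith
      · nlinarith [hexp, hup]
    have hP2 : |P - (1 + A * t^2)| ≤ Ca ν * t^4 := hstar
    have hfinal : |S - A| * t^2 ≤ (S^2 + Ca ν) * t^4 := by
      have : |S - A| * t^2 = |(P - (1 + A*t^2)) - (P - (1 + S*t^2))| := by
        rw [show (P - (1 + A*t^2)) - (P - (1 + S*t^2)) = (S - A)*t^2 by ring]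
        rw [abs_mul, _root_.abs_of_nonneg (by positivity : (0:ℝ) ≤ t^2)]
      rw [this]
      calc |(P - (1 + A*t^2)) - (P - (1 + S*t^2))|
          ≤ |P - (1 + A*t^2)| + |P - (1 + S*t^2)| := abs_sub _ _
        _ ≤ Ca ν * t^4 + S^2 * t^4 := add_le_add hP2 hP1
        _ = (S^2 + Ca ν) * t^4 := by ring
    have ht2pos : 0 < t^2 := by positivity
    have hred : |S - A| ≤ (S^2 + Ca ν) * t^2 := by
      have := hfinal
      rw [show (S^2 + Ca ν) * t^4 = ((S^2 + Ca ν) * t^2) * t^2 by ring] at this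
      exact le_of_mul_le_mul_right this ht2pos
    have : |S - A| ≤ |S - A| / 2 := by
      calc |S - A| ≤ (S^2 + Ca ν) * t^2 := hred
        _ ≤ (S^2 + Ca ν + 1) * (|S - A| / (2 * (S^2 + Ca ν + 1))) := by
            apply mul_le_mul (by linarith) ht2 ht2pos.le (by positivity)
        _ = |S - A| / 2 := cancel _ _ (by positivity)
    exact absurd this (not_le.2 (div_lt_self hd0 one_lt_two))
  · -- non-summable case: contradiction
    exfalso
    set t : ℝ := min 1 (Real.sqrt (A / (2 * (Ca ν + 1)))) with htdef
    have ht0 : 0 < t := lt_min one_pos (Real.sqrt_pos.2 (by positivity))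
    have ht1 : t ≤ 1 := min_le_left _ _
    have ht2 : t^2 ≤ A / (2 * (Ca ν + 1)) := by
      calc t^2 ≤ (Real.sqrt (A / (2 * (Ca ν + 1))))^2 :=
            pow_le_pow_left₀ ht0.le (min_le_right _ _) 2
        _ = A / (2 * (Ca ν + 1)) := Real.sq_sqrt (by positivity)
    have hnsx : ¬ Summable (fun n => t^2 * f n) := by
      intro h
      apply hsum
      have := h.mul_left (1/t^2)
      apply this.congr
      intro n
      field_simp
    have hnm := not_mult_complex (fun n => t^2 * f n) (fun n => by positivity) hnsx
    have hQ1 : (∏' n : ℕ, ((1 + t^2 * f n : ℝ) : ℂ)) = 1 := by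
      apply tprod_eq_one_of_not_multipliable
      intro h
      apply hnm
      apply h.congr
      intro n
      push_cast
      ring
    have hstar := star t ht0 ht1
    rw [hQ1] at hstar
    have : ‖(1:ℂ) - ((1 + A * t^2 : ℝ) : ℂ)‖ = A * t^2 := by
      rw [show (1:ℂ) - ((1 + A * t^2 : ℝ) : ℂ) = ((-(A * t^2) : ℝ) : ℂ) by push_cast; ring,
        Complex.norm_real, Real.norm_eq_abs, abs_neg, _root_.abs_of_nonneg (by positivity)]
    rw [this] at hstar
    -- A * t^2 ≤ Ca * t^4  ⇒  A ≤ Ca * t^2 ≤ (Ca+1) t^2 ≤ A/2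
    have hred : A ≤ Ca ν * t^2 := by
      have h := hstar
      rw [show Ca ν * t^4 = (Ca ν * t^2) * t^2 by ring,
        show A * t^2 = A * t^2 by rfl] at h
      have := le_of_mul_le_mul_right (by linarith [h] : A * t^2 ≤ (Ca ν * t^2) * t^2) (by positivity : (0:ℝ) < t^2)
      exact this
    have : A ≤ A / 2 := by
      calc A ≤ Ca ν * t^2 := hred
        _ ≤ (Ca ν + 1) * (A / (2 * (Ca ν + 1))) := by
            apply mul_le_mul (by linarith) ht2 (by positivity) (by positivity)
        _ = A / 2 := cancel _ _ (by positivity)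
    exact absurd this (not_le.2 (div_lt_self hA0 one_lt_two))
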